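/- arXiv:0909.5324 — 2 statements merged into one kernel-verified Lean document; each statement's English description precedes it below -/
import Mathlib

section
/- Let C be a generalized Cartan matrix on a finite nonempty set I and let v : I → ℝ be a configuration. Suppose there is a (<-1)-play from v of length r ending at a configuration having no coordinate strictly less than -1. Then every (<-1)-play from v has length s ≤ r, and every (<-1)-play from v of length s can be extended to a (<-1)-play from v of length r ending at that same configuration. -/
/-- Firing vertex `i`: `v` is replaced by `fun j => v j - C i j * v i`. -/
def fire {I : Type*} (C : I → I → ℤ) (i : I) (v : I → ℝ) : I → ℝ :=
  fun j => v j - (C i j : ℝ) * v i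

/-- The configuration resulting from firing the vertices in the list `l` successively. -/
def playResult {I : Type*} (C : I → I → ℤ) : (I → ℝ) → List I → (I → ℝ)
  | v, [] => v
  | v, i :: l => playResult C (fire C i v) l

/-- `IsPlay C θ v l` : the list `l` is a sequence of successive firings starting at `v`
in which each fired vertex has amplitude strictly less than `θ` at the time it is fired.
With `θ = 0` this is a legal play; with `θ = -1` a `(<-1)`-play. -/
def IsPlay {I : Type*} (C : I → I → ℤ) (θ : ℝ) : (I → ℝ) → List I → Prop
  | _, [] => True
  | v, i :: l => v i < θ ∧ IsPlay C θ (fire C i v) l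

/-!
Firing is deterministic, so the theorem is a Newman-type confluence statement, proved by
induction on the length `r` of the given play. The local step: if two distinct vertices `i, j`
can both be fired, then the rank-two subsystem on `{i, j}` either closes up (the alternating
plays `i j i …` and `j i j …` of the braid length `m ∈ {2, 3, 4, 6}` are both `(<-1)`-plays with
the same result), or, when `C i j * C j i ≥ 4`, the alternating play after firing `j` never
stops, contradicting the bound `r - 1` on plays after `j`.
-/

section Plays

variable {I : Type*} (C : I → I → ℤ)

@[simp]
theorem playResult_append (l₁ l₂ : List I) (v : I → ℝ) :
    playResult C v (l₁ ++ l₂) = playResult C (playResult C v l₁) l₂ := by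
  induction l₁ generalizing v with
  | nil => rfl
  | cons i l ih => exact ih (fire C i v)

theorem isPlay_append (θ : ℝ) (l₁ l₂ : List I) (v : I → ℝ) :
    IsPlay C θ v (l₁ ++ l₂) ↔ IsPlay C θ v l₁ ∧ IsPlay C θ (playResult C v l₁) l₂ := by
  induction l₁ generalizing v with
  | nil => simp [IsPlay, playResult]
  | cons i l ih => simp only [List.cons_append, IsPlay, playResult, ih, and_assoc]

def alternatingList : ℕ → I → I → List I
  | 0, _, _ => []
  | n + 1, i, j => i :: alternatingList n j i

@[simp]
theorem length_alternatingList (n : ℕ) (i j : I) :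
    (alternatingList n i j).length = n := by
  induction n generalizing i j with
  | zero => rfl
  | succ n ih => simp [alternatingList, ih]

theorem exists_braid_play (hdiag : ∀ i, C i i = 2) {i j : I} (hij : C i j ≤ 0) (hji : C j i ≤ 0)
    (hzero : C i j = 0 ↔ C j i = 0) (hlt : C i j * C j i < 4) {v : I → ℝ}
    (hi : v i < -1) (hj : v j < -1) :
    ∃ m, IsPlay C (-1) (fire C i v) (alternatingList m j i) ∧
      IsPlay C (-1) (fire C j v) (alternatingList m i j) ∧
      playResult C (fire C i v) (alternatingList m j i) =
        playResult C (fire C j v) (alternatingList m i j) := by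
  wlog hle : C j i ≤ C i j generalizing i j
  · obtain ⟨m, hpi, hpj, heq⟩ :=
      this hji hij hzero.symm (by linarith [mul_comm (C i j) (C j i)]) hj hi (by omega)
    exact ⟨m, hpj, hpi, heq.symm⟩
  have hcases : (C i j = 0 ∧ C j i = 0) ∨
      (C i j = -1 ∧ (C j i = -1 ∨ C j i = -2 ∨ C j i = -3)) := by
    rcases eq_or_lt_of_le hij with h | h
    · exact Or.inl ⟨h, hzero.1 h⟩
    · have : C j i ≠ 0 := fun h' => h.ne (hzero.2 h')
      have : -1 ≤ C i j := by nlinarith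
      have : -3 ≤ C j i := by nlinarith
      omega
  -- braid lengths `2, 3, 4, 6` of the finite rank-two types `A₁ × A₁`, `A₂`, `B₂`, `G₂`
  rcases hcases with ⟨ha, hb⟩ | ⟨ha, hb | hb | hb⟩ <;>
  [refine ⟨1, ?_, ?_, ?_⟩; refine ⟨2, ?_, ?_, ?_⟩; refine ⟨3, ?_, ?_, ?_⟩;
    refine ⟨5, ?_, ?_, ?_⟩] <;>
  first
    | funext k
      simp only [alternatingList, playResult, fire, hdiag, ha, hb]
      push_cast
      ring
    | simp only [alternatingList, IsPlay, fire, hdiag, ha, hb, and_true]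
      push_cast
      and_intros <;> linarith

/-- The invariant that keeps the alternating play `i j i …` going when `C i j * C j i ≥ 4`. -/
def AlternatingDescent (v : I → ℝ) (i j : I) : Prop :=
  v i < -1 ∧ fire C i v j < -1 ∧ 2 * fire C i v j ≤ -C i j * v i

theorem AlternatingDescent.step (hdiag : ∀ i, C i i = 2) {i j : I}
    (hji : C j i ≤ -1) (h4 : 4 ≤ C i j * C j i) {v : I → ℝ}
    (h : AlternatingDescent C v i j) : AlternatingDescent C (fire C i v) j i := by
  obtain ⟨hx, hy, hyx⟩ := h
  have hji' : (C j i : ℝ) ≤ -1 := by exact_mod_cast hji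
  have h4' : (4 : ℝ) ≤ C i j * C j i := by exact_mod_cast h4
  simp only [AlternatingDescent, fire, hdiag] at hy hyx ⊢
  push_cast at hy hyx ⊢
  -- multiply `hyx` by `-C j i > 0` and use `C i j * C j i ≥ 4`, `v i < 0`
  have key : -C j i * (v j - C i j * v i) ≤ 2 * v i := by nlinarith
  exact ⟨hy, by nlinarith, by nlinarith⟩

theorem isPlay_alternatingList (hdiag : ∀ i, C i i = 2) (n : ℕ) {i j : I}
    (hij : C i j ≤ -1) (hji : C j i ≤ -1) (h4 : 4 ≤ C i j * C j i) {v : I → ℝ}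
    (h : AlternatingDescent C v i j) : IsPlay C (-1) v (alternatingList n i j) := by
  induction n generalizing i j v with
  | zero => trivial
  | succ n ih =>
    exact ⟨h.1, ih hji hij (by linarith [mul_comm (C i j) (C j i)])
      (h.step C hdiag hji h4)⟩

theorem alternatingDescent_fire (hdiag : ∀ i, C i i = 2) {i j : I}
    (hij : C i j ≤ -1) (hji : C j i ≤ -1) (h4 : 4 ≤ C i j * C j i) {v : I → ℝ}
    (hi : v i < -1) (hj : v j < -1) : AlternatingDescent C (fire C j v) i j := by
  have hij' : (C i j : ℝ) ≤ -1 := by exact_mod_cast hij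
  have hji' : (C j i : ℝ) ≤ -1 := by exact_mod_cast hji
  have h4' : (4 : ℝ) ≤ C i j * C j i := by exact_mod_cast h4
  simp only [AlternatingDescent, fire, hdiag]
  push_cast
  exact ⟨by nlinarith, by nlinarith, by nlinarith⟩

theorem exists_braid_play_or_isPlay_alternatingList (hdiag : ∀ i, C i i = 2)
    (hoff : ∀ i j, i ≠ j → C i j ≤ 0) (hzero : ∀ i j, C i j = 0 ↔ C j i = 0)
    {i j : I} (hne : i ≠ j) {v : I → ℝ} (hi : v i < -1) (hj : v j < -1) :
    (∃ m, IsPlay C (-1) (fire C i v) (alternatingList m j i) ∧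
      IsPlay C (-1) (fire C j v) (alternatingList m i j) ∧
      playResult C (fire C i v) (alternatingList m j i) =
        playResult C (fire C j v) (alternatingList m i j)) ∨
    ∀ n, IsPlay C (-1) (fire C j v) (alternatingList n i j) := by
  rcases lt_or_ge (C i j * C j i) 4 with hlt | h4
  · exact .inl (exists_braid_play C hdiag (hoff i j hne) (hoff j i hne.symm) (hzero i j) hlt hi hj)
  · have hij : C i j ≤ -1 := by nlinarith [hoff i j hne, hoff j i hne.symm]
    have hji : C j i ≤ -1 := by nlinarith [hoff i j hne, hoff j i hne.symm]
    exact .inr fun n =>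
      isPlay_alternatingList C hdiag n hij hji h4 (alternatingDescent_fire C hdiag hij hji h4 hi hj)

def Converges (v : I → ℝ) (n : ℕ) (z : I → ℝ) : Prop :=
  ∀ q : List I, IsPlay C (-1) v q →
    q.length ≤ n ∧ ∃ ext : List I, IsPlay C (-1) v (q ++ ext) ∧
      (q ++ ext).length = n ∧ playResult C v (q ++ ext) = z

theorem converges_zero {v : I → ℝ} (hv : ∀ j, -1 ≤ v j) : Converges C v 0 v := by
  rintro (_ | ⟨i, q⟩) hq
  · exact ⟨le_rfl, [], trivial, rfl, rfl⟩
  · exact absurd hq.1 (hv i).not_gt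

theorem converges_succ {v : I → ℝ} {n : ℕ} {z : I → ℝ} {j : I} (hj : v j < -1)
    (h : ∀ i, v i < -1 → Converges C (fire C i v) n z) : Converges C v (n + 1) z := by
  rintro (_ | ⟨i, q⟩) hq
  · obtain ⟨-, ext, hext, hlen, hres⟩ := h j hj [] trivial
    exact ⟨by simp, j :: ext, ⟨hj, hext⟩, by simpa using hlen, hres⟩
  · obtain ⟨hle, ext, hext, hlen, hres⟩ := h i hq.1 q hq.2
    exact ⟨by simpa using hle, ext, ⟨hq.1, hext⟩, by simpa using hlen, hres⟩

theorem exists_play_of_converges_fire (hdiag : ∀ i, C i i = 2)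
    (hoff : ∀ i j, i ≠ j → C i j ≤ 0) (hzero : ∀ i j, C i j = 0 ↔ C j i = 0)
    {v : I → ℝ} {n : ℕ} {z : I → ℝ} {i j : I} (hi : v i < -1) (hj : v j < -1)
    (h : Converges C (fire C j v) n z) :
    ∃ p, IsPlay C (-1) (fire C i v) p ∧ p.length = n ∧ playResult C (fire C i v) p = z := by
  by_cases hne : i = j
  · subst hne
    obtain ⟨-, p, hp, hlen, hres⟩ := h [] trivial
    exact ⟨p, hp, hlen, hres⟩
  rcases exists_braid_play_or_isPlay_alternatingList C hdiag hoff hzero hne hi hj with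
    ⟨m, hpi, hpj, heq⟩ | hunbounded
  · obtain ⟨-, f, hf, hlen, hres⟩ := h _ hpj
    rw [isPlay_append] at hf
    refine ⟨alternatingList m j i ++ f, ?_, by simpa using hlen, ?_⟩
    · rw [isPlay_append, heq]
      exact ⟨hpi, hf.2⟩
    · rw [playResult_append, heq, ← playResult_append, hres]
  · simpa using (h _ (hunbounded (n + 1))).1

theorem converges_playResult (hdiag : ∀ i, C i i = 2)
    (hoff : ∀ i j, i ≠ j → C i j ≤ 0) (hzero : ∀ i j, C i j = 0 ↔ C j i = 0) (n : ℕ) :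
    ∀ (v : I → ℝ) (p : List I), IsPlay C (-1) v p → p.length = n →
      (∀ j, -1 ≤ playResult C v p j) → Converges C v n (playResult C v p) := by
  induction n with
  | zero =>
    rintro v p - hlen hend
    obtain rfl := List.eq_nil_of_length_eq_zero hlen
    exact converges_zero C hend
  | succ n ih =>
    rintro v (_ | ⟨j, p⟩) ⟨hj, hp⟩ hlen hend
    · simp at hlen
    have hlen : p.length = n := by simpa using hlen
    change ∀ k, -1 ≤ playResult C (fire C j v) p k at hend
    change Converges C v (n + 1) (playResult C (fire C j v) p)
    refine converges_succ C hj fun i hi => ?_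
    obtain ⟨p', hp', hlen', hres⟩ :=
      exists_play_of_converges_fire C hdiag hoff hzero hi hj (ih _ p hp hlen hend)
    rw [← hres] at hend ⊢
    exact ih _ p' hp' hlen' hend

end Plays

theorem lt_neg_one_play_extension_general
    {I : Type*} (C : I → I → ℤ)
    (hdiag : ∀ i, C i i = 2)
    (hoff : ∀ i j, i ≠ j → C i j ≤ 0)
    (hzero : ∀ i j, C i j = 0 ↔ C j i = 0)
    (v : I → ℝ) (p : List I)
    (hp : IsPlay C (-1) v p)
    (hend : ∀ j, -1 ≤ playResult C v p j) :
    ∀ q : List I, IsPlay C (-1) v q →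
      q.length ≤ p.length ∧
      ∃ ext : List I, IsPlay C (-1) v (q ++ ext) ∧
        (q ++ ext).length = p.length ∧
        playResult C v (q ++ ext) = playResult C v p :=
  converges_playResult C hdiag hoff hzero p.length v p hp rfl hend

/-- Lemma on `(<-1)`-plays: if some `(<-1)`-play from `v` of length `r` ends at a
configuration with no coordinate `< -1`, then every `(<-1)`-play from `v` has length
`≤ r` and can be extended to a `(<-1)`-play of length `r` ending at that same
configuration. -/
theorem lt_neg_one_play_extension
    {I : Type*} [Fintype I] [Nonempty I] (C : I → I → ℤ)
    (hdiag : ∀ i, C i i = 2)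
    (hoff : ∀ i j, i ≠ j → C i j ≤ 0)
    (hzero : ∀ i j, C i j = 0 ↔ C j i = 0)
    (v : I → ℝ) (p : List I)
    (hp : IsPlay C (-1) v p)
    (hend : ∀ j, -1 ≤ playResult C v p j) :
    ∀ q : List I, IsPlay C (-1) v q →
      q.length ≤ p.length ∧
      ∃ ext : List I, IsPlay C (-1) v (q ++ ext) ∧
        (q ++ ext).length = p.length ∧
        playResult C v (q ++ ext) = playResult C v p :=
  lt_neg_one_play_extension_general C hdiag hoff hzero v p hp hend
end

section
/- Let n ≥ 2. The map s ↦ (γ_1(s), …, γ_{n-1}(s)) is a bijection from the set of dominant elements of S̃_n onto ℕ^{n-1}. Moreover, a dominant element s of S̃_n satisfies s(i) + n > s(i+1) for all 1 ≤ i ≤ n-1 (i.e., s lies in the unit hypercube) if and only if γ_i(s) ≤ i-1 for all 1 ≤ i ≤ n-1. -/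
/-- `s` is an element of the affine symmetric group `S̃_n`: a bijection of `ℤ` commuting
with translation by `n` and with normalized sum over a fundamental window. -/
def IsAffPerm (n : ℕ) (s : ℤ → ℤ) : Prop :=
  Function.Bijective s ∧ (∀ i : ℤ, s (i + n) = s i + n) ∧
    ∑ i ∈ Finset.Icc (1 : ℤ) (n : ℤ), s i = ∑ i ∈ Finset.Icc (1 : ℤ) (n : ℤ), i

/-- `s` is dominant: `s(1) < s(2) < ⋯ < s(n)`. -/
def IsDominant (n : ℕ) (s : ℤ → ℤ) : Prop :=
  ∀ i : ℤ, 1 ≤ i → i < (n : ℤ) → s i < s (i + 1)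

/-- The inversion number of `s` (equal to the Coxeter length). -/
noncomputable def invNum (n : ℕ) (s : ℤ → ℤ) : ℕ :=
  Set.ncard {p : ℤ × ℤ | 1 ≤ p.1 ∧ p.1 ≤ (n : ℤ) ∧ p.1 < p.2 ∧ s p.2 < s p.1}

/-- `γ_i(s)` : the number of integers `t` with `s(i) < t < s(i+1)` such that
`t ≢ s(k) (mod n)` for all `i+1 ≤ k ≤ n`. -/
noncomputable def gam (n : ℕ) (s : ℤ → ℤ) (i : ℤ) : ℕ :=
  Set.ncard {t : ℤ | s i < t ∧ t < s (i + 1) ∧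
    ∀ k : ℤ, i + 1 ≤ k → k ≤ (n : ℤ) → ¬ t ≡ s k [ZMOD (n : ℤ)]}

/-!
Write `avoidSet n s i` for the integers whose residue mod `n` differs from those of
`s (i + 1), …, s n`, so that `γ_i(s)` counts its elements strictly between `s i` and
`s (i + 1)`. For a dominant `s` the window values `s 1 < ⋯ < s n` have distinct residues,
so `s i` itself lies in `avoidSet n s i`, and it is the unique element `x < s (i + 1)` of
that set with exactly `γ_i(s)` elements of the set between `x` and `s (i + 1)`. Hence
`s (n - 1), …, s 1` are determined by `s n` and `γ`, and any `γ` arises from such a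
downward construction. The top value is fixed by the normalisation: a telescoping count of
residue classes gives `∑ γ_i = ∑_k ⌊(s n - s k) / n⌋`, which equals `s n - n` exactly when
`∑ s k = n (n + 1) / 2`.

The integers counted by `γ_i` are those in `(s i, s (i + 1))` congruent to one of
`s 1, …, s i`; an interval of length at most `n` meets each of these `i` classes at most
once and misses that of `s i`, while a longer one meets all of them.
-/

open Finset

open scoped Classical

section IntegerCounting

variable {n : ℕ}

lemma exists_greatest_mem_lt {R : Set ℤ} (hR : ∀ y, ∃ r ∈ R, r < y) (y : ℤ) :
    ∃ x ∈ R, x < y ∧ ∀ t ∈ R, t < y → t ≤ x := by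
  obtain ⟨x, ⟨hxR, hxy⟩, hmax⟩ :=
    Int.exists_greatest_of_bdd ⟨y, fun t ht => ht.2.le⟩ (hR y)
  exact ⟨x, hxR, hxy, fun t htR hty => hmax t ⟨htR, hty⟩⟩

lemma card_filter_Ioo_lt_of_lt {R : Set ℤ} {x x' b : ℤ} (hx' : x' ∈ R) (hxx' : x < x')
    (hx'b : x' < b) : #{t ∈ Ioo x' b | t ∈ R} < #{t ∈ Ioo x b | t ∈ R} := by
  refine card_lt_card ⟨fun t ht => ?_, fun hsub => ?_⟩
  · simp only [mem_filter, mem_Ioo] at ht ⊢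
    exact ⟨⟨hxx'.trans ht.1.1, ht.1.2⟩, ht.2⟩
  · have := hsub (mem_filter.2 ⟨mem_Ioo.2 ⟨hxx', hx'b⟩, hx'⟩)
    simp at this

lemma existsUnique_card_filter_Ioo_eq {R : Set ℤ} (hR : ∀ y, ∃ r ∈ R, r < y) (b : ℤ) (c : ℕ) :
    ∃! x, x ∈ R ∧ x < b ∧ #{t ∈ Ioo x b | t ∈ R} = c := by
  refine existsUnique_of_exists_of_unique ?_ ?_
  · induction c with
    | zero =>
      obtain ⟨x, hxR, hxb, hmax⟩ := exists_greatest_mem_lt hR b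
      refine ⟨x, hxR, hxb, card_eq_zero.2 (filter_eq_empty_iff.2 fun t ht htR => ?_)⟩
      have := hmax t htR (mem_Ioo.1 ht).2
      have := (mem_Ioo.1 ht).1
      omega
    | succ c ih =>
      obtain ⟨x, hxR, hxb, hcard⟩ := ih
      obtain ⟨x', hx'R, hx'x, hmax⟩ := exists_greatest_mem_lt hR x
      refine ⟨x', hx'R, hx'x.trans hxb, ?_⟩
      have hinsert : {t ∈ Ioo x' b | t ∈ R} = insert x {t ∈ Ioo x b | t ∈ R} := by
        ext t
        simp only [mem_filter, mem_Ioo, mem_insert]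
        constructor
        · rintro ⟨⟨h1, h2⟩, htR⟩
          rcases lt_trichotomy t x with h | h | h
          · exact absurd (hmax t htR h) (not_le.2 h1)
          · exact Or.inl h
          · exact Or.inr ⟨⟨h, h2⟩, htR⟩
        · rintro (rfl | ⟨⟨h1, h2⟩, htR⟩)
          · exact ⟨⟨hx'x, hxb⟩, hxR⟩
          · exact ⟨⟨hx'x.trans h1, h2⟩, htR⟩
      rw [hinsert, card_insert_of_notMem (by simp), hcard]
  · rintro x y ⟨hxR, hxb, hx⟩ ⟨hyR, hyb, hy⟩
    by_contra hne
    rcases lt_or_gt_of_ne hne with h | h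
    · exact absurd (hy ▸ hx) (card_filter_Ioo_lt_of_lt hyR h hyb).ne'
    · exact absurd (hx ▸ hy) (card_filter_Ioo_lt_of_lt hxR h hxb).ne'

lemma eq_of_modEq_of_abs_sub_lt {a b : ℤ} (h : a ≡ b [ZMOD n]) (hab : |a - b| < n) : a = b :=
  sub_eq_zero.1 (Int.eq_zero_of_abs_lt_dvd (Int.ModEq.dvd h.symm) hab)

lemma injOn_emod_Ioc (a : ℤ) : Set.InjOn (· % (n : ℤ)) (Ioc a (a + n) : Set ℤ) := by
  intro x hx y hy hxy
  simp only [coe_Ioc, Set.mem_Ioc] at hx hy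
  exact eq_of_modEq_of_abs_sub_lt hxy (abs_lt.2 ⟨by omega, by omega⟩)

lemma image_emod_eq_Ico {ι : Type*} (hn : 0 < n) (I : Finset ι) (f : ι → ℤ)
    (hinj : Set.InjOn (fun i => f i % n) I) (hcard : #I = n) :
    I.image (fun i => f i % n) = Ico 0 (n : ℤ) := by
  refine eq_of_subset_of_card_le (fun r hr => ?_) ?_
  · obtain ⟨i, -, rfl⟩ := mem_image.1 hr
    exact mem_Ico.2 ⟨Int.emod_nonneg _ (by omega), Int.emod_lt_of_pos _ (by omega)⟩
  · rw [card_image_of_injOn hinj, Int.card_Ico, hcard]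
    simp

lemma exists_mem_modEq_of_injOn {ι : Type*} (hn : 0 < n) (I : Finset ι) (f : ι → ℤ)
    (hinj : Set.InjOn (fun i => f i % n) I) (hcard : #I = n) (t : ℤ) :
    ∃ i ∈ I, t ≡ f i [ZMOD n] := by
  have ht : t % n ∈ I.image (fun i => f i % n) := by
    rw [image_emod_eq_Ico hn I f hinj hcard]
    exact mem_Ico.2 ⟨Int.emod_nonneg _ (by omega), Int.emod_lt_of_pos _ (by omega)⟩
  obtain ⟨i, hi, hit⟩ := mem_image.1 ht
  exact ⟨i, hi, hit.symm⟩

lemma card_filter_emod_mem_le_card_erase (C : Finset ℤ) {a b : ℤ} (hb : b ≤ a + n) :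
    #{t ∈ Ioo a b | t % (n : ℤ) ∈ C} ≤ #(C.erase (a % n)) := by
  refine card_le_card_of_injOn (· % (n : ℤ)) (fun t ht => ?_) fun x hx y hy hxy => ?_
  · simp only [coe_filter, mem_Ioo, Set.mem_ofPred_eq] at ht
    refine mem_coe.2 (mem_erase.2 ⟨fun hta => ?_, ht.2⟩)
    have := eq_of_modEq_of_abs_sub_lt (n := n) hta (abs_lt.2 ⟨by omega, by omega⟩)
    omega
  · simp only [coe_filter, mem_Ioo, Set.mem_ofPred_eq] at hx hy
    exact eq_of_modEq_of_abs_sub_lt hxy (abs_lt.2 ⟨by omega, by omega⟩)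

lemma card_le_card_filter_emod_mem (hn : 0 < n) {C : Finset ℤ} (hC : C ⊆ Ico 0 (n : ℤ))
    {a b : ℤ} (hb : a + n < b) : #C ≤ #{t ∈ Ioo a b | t % (n : ℤ) ∈ C} := by
  have hall : (Ioc a (a + n)).image (· % (n : ℤ)) = Ico 0 (n : ℤ) :=
    image_emod_eq_Ico hn _ id (injOn_emod_Ioc a) (by simp)
  calc #C ≤ #({t ∈ Ioo a b | t % (n : ℤ) ∈ C}.image (· % (n : ℤ))) := by
        refine card_le_card fun r hr => ?_
        obtain ⟨t, ht, rfl⟩ := mem_image.1 (hall ▸ hC hr)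
        have := mem_Ioc.1 ht
        exact mem_image.2 ⟨t, mem_filter.2 ⟨mem_Ioo.2 ⟨by omega, by omega⟩, hr⟩, rfl⟩
    _ ≤ _ := card_image_le

lemma card_filter_modEq_Ioc {x y : ℤ} (hn : 0 < n) (hxy : x ≤ y) :
    (#{t ∈ Ioc x y | t ≡ x [ZMOD n]} : ℤ) = (y - x) / n := by
  rw [Int.Ioc_filter_modEq_card _ _ (by omega), sub_self, zero_div, Int.floor_zero, sub_zero,
    ← Int.cast_sub, Int.cast_natCast, Rat.floor_intCast_div_natCast]
  exact max_eq_left (Int.ediv_nonneg (by omega) (by omega))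

end IntegerCounting

section Window

variable {n : ℕ} {s : ℤ → ℤ}

lemma apply_add_mul_of_apply_add (hs : ∀ i, s (i + n) = s i + n) (i m : ℤ) :
    s (i + m * n) = s i + m * n := by
  have hper : Function.Periodic (fun i => s i - i) (n : ℤ) := fun i => by
    simp only [hs]; ring
  have := hper.int_mul m i
  simp only [Int.cast_id] at this
  linarith

lemma exists_mem_Icc_eq_add_mul (hn : 0 < n) (t : ℤ) :
    ∃ k ∈ Set.Icc 1 (n : ℤ), ∃ m : ℤ, t = k + m * n := by
  refine ⟨(t - 1) % n + 1, ⟨?_, ?_⟩, (t - 1) / n, ?_⟩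
  · have := Int.emod_nonneg (t - 1) (by omega : (n : ℤ) ≠ 0); omega
  · have := Int.emod_lt_of_pos (t - 1) (by omega : (0 : ℤ) < n); omega
  · have := Int.emod_add_ediv_mul (t - 1) n; linarith

lemma eq_of_eqOn_Icc (hn : 0 < n) {s' : ℤ → ℤ} (hs : ∀ i, s (i + n) = s i + n)
    (hs' : ∀ i, s' (i + n) = s' i + n) (h : Set.EqOn s s' (Set.Icc 1 n)) : s = s' := by
  funext t
  obtain ⟨k, hk, m, rfl⟩ := exists_mem_Icc_eq_add_mul hn t
  rw [apply_add_mul_of_apply_add hs, apply_add_mul_of_apply_add hs', h hk]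

lemma injOn_emod_of_injective (hs : ∀ i, s (i + n) = s i + n) (hinj : Function.Injective s) :
    Set.InjOn (fun k => s k % n) (Set.Icc 1 (n : ℤ)) := by
  intro j hj k hk hjk
  obtain ⟨m, hm⟩ := Int.ModEq.dvd hjk
  have hkj : k = j + m * n := hinj (by rw [apply_add_mul_of_apply_add hs]; linarith)
  refine eq_of_modEq_of_abs_sub_lt (Int.modEq_iff_dvd.2 ⟨m, by linarith⟩) (abs_lt.2 ?_)
  simp only [Set.mem_Icc] at hj hk
  omega

lemma bijective_of_injOn_emod (hn : 0 < n) (hs : ∀ i, s (i + n) = s i + n)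
    (hres : Set.InjOn (fun k => s k % n) (Set.Icc 1 (n : ℤ))) : Function.Bijective s := by
  refine ⟨fun a b hab => ?_, fun y => ?_⟩
  · obtain ⟨j, hj, p, rfl⟩ := exists_mem_Icc_eq_add_mul hn a
    obtain ⟨k, hk, q, rfl⟩ := exists_mem_Icc_eq_add_mul hn b
    rw [apply_add_mul_of_apply_add hs, apply_add_mul_of_apply_add hs] at hab
    have hjk : j = k := hres hj hk (by
      simpa only [Int.add_mul_emod_self_right] using congrArg (· % (n : ℤ)) hab)
    subst hjk
    have : p = q := mul_right_cancel₀ (by omega : (n : ℤ) ≠ 0) (by linarith)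
    rw [this]
  · obtain ⟨k, hk, hyk⟩ :=
      exists_mem_modEq_of_injOn hn (Icc 1 (n : ℤ)) s (by rwa [coe_Icc]) (by simp) y
    obtain ⟨m, hm⟩ := Int.ModEq.dvd hyk
    exact ⟨k + (-m) * n, by rw [apply_add_mul_of_apply_add hs]; linarith⟩

/-- The unique function satisfying `s (i + n) = s i + n` that agrees with `w` on `[1, n]`. -/
def extendWindow (n : ℕ) (w : ℤ → ℤ) (t : ℤ) : ℤ :=
  w ((t - 1) % n + 1) + (t - 1) / n * n

lemma extendWindow_add (hn : 0 < n) (w : ℤ → ℤ) (t : ℤ) :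
    extendWindow n w (t + n) = extendWindow n w t + n := by
  have hmod : (t + n - 1) % n = (t - 1) % n := by
    rw [show t + n - 1 = t - 1 + 1 * n by ring, Int.add_mul_emod_self_right]
  have hdiv : (t + n - 1) / n = (t - 1) / n + 1 := by
    rw [show t + n - 1 = t - 1 + 1 * n by ring, Int.add_mul_ediv_right _ _ (by omega)]
  simp only [extendWindow, hmod, hdiv]
  ring

lemma extendWindow_of_mem_Icc (w : ℤ → ℤ) {t : ℤ} (ht : t ∈ Set.Icc 1 (n : ℤ)) :
    extendWindow n w t = w t := by
  obtain ⟨h1, h2⟩ := ht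
  rw [extendWindow, Int.emod_eq_of_lt (by omega) (by omega),
    Int.ediv_eq_zero_of_lt (by omega) (by omega)]
  simp

end Window

section AvoidSet

variable {n : ℕ} {s : ℤ → ℤ}

def avoidSet (n : ℕ) (s : ℤ → ℤ) (i : ℤ) : Set ℤ :=
  {t | ∀ k ∈ Set.Ioc i (n : ℤ), ¬ t ≡ s k [ZMOD n]}

lemma gam_eq_card_filter (n : ℕ) (s : ℤ → ℤ) (i : ℤ) :
    gam n s i = #{t ∈ Ioo (s i) (s (i + 1)) | t ∈ avoidSet n s i} := by
  rw [gam, ← Set.ncard_coe_finset, coe_filter]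
  congr 1
  ext t
  simp [avoidSet, and_assoc]

lemma avoidSet_congr {s' : ℤ → ℤ} {i : ℤ} (h : Set.EqOn s s' (Set.Ioc i n)) :
    avoidSet n s i = avoidSet n s' i := by
  ext t
  exact forall₂_congr fun k hk => by rw [h hk]

lemma gam_congr {s' : ℤ → ℤ} {i : ℤ} (hi : i < n) (h : Set.EqOn s s' (Set.Icc i n)) :
    gam n s i = gam n s' i := by
  rw [gam_eq_card_filter, gam_eq_card_filter, h ⟨le_rfl, hi.le⟩, h ⟨by omega, by omega⟩,
    avoidSet_congr (h.mono Set.Ioc_subset_Icc_self)]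

lemma sub_mul_mem_avoidSet {i t : ℤ} (ht : t ∈ avoidSet n s i) (m : ℤ) :
    t - m * n ∈ avoidSet n s i := fun k hk htk =>
  ht k hk (by rwa [Int.ModEq, Int.sub_mul_emod_self_right] at htk)

lemma exists_mem_avoidSet_lt (hn : 0 < n) {i : ℤ} (hne : (avoidSet n s i).Nonempty) (y : ℤ) :
    ∃ r ∈ avoidSet n s i, r < y := by
  obtain ⟨r, hr⟩ := hne
  refine ⟨r - (|r - y| + 1) * n, sub_mul_mem_avoidSet hr _, ?_⟩
  have : |r - y| + 1 ≤ (|r - y| + 1) * n :=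
    le_mul_of_one_le_right (by positivity) (by exact_mod_cast hn)
  linarith [le_abs_self (r - y)]

/-- Only the `n - i < n` residue classes of `s (i + 1), …, s n` are excluded. -/
lemma avoidSet_nonempty (hn : 0 < n) {i : ℤ} (hi : 0 < i) : (avoidSet n s i).Nonempty := by
  have hcard : #((Ioc i n).image fun k => s k % n) < #(Ico 0 (n : ℤ)) :=
    card_image_le.trans_lt (by simp; omega)
  obtain ⟨r, hr, hrC⟩ := exists_mem_notMem_of_card_lt_card hcard
  obtain ⟨hr0, hrn⟩ := mem_Ico.1 hr
  refine ⟨r, fun k hk hrk => hrC (mem_image.2 ⟨k, by simpa using hk, ?_⟩)⟩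
  show s k % n = r
  rw [← hrk]
  exact Int.emod_eq_of_lt hr0 hrn

variable (hres : Set.InjOn (fun k => s k % n) (Set.Icc 1 (n : ℤ)))
include hres

lemma mem_avoidSet_self {i : ℤ} (hi : i ∈ Set.Icc 1 (n : ℤ)) : s i ∈ avoidSet n s i :=
  fun k hk hik => by
    have := hres hi ⟨by linarith [hi.1, hk.1], hk.2⟩ hik
    linarith [hk.1]

lemma mem_avoidSet_iff (hn : 0 < n) {i t : ℤ} :
    t ∈ avoidSet n s i ↔ ∃ k ∈ Set.Icc 1 i, t ≡ s k [ZMOD n] := by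
  constructor
  · intro ht
    obtain ⟨k, hk, htk⟩ :=
      exists_mem_modEq_of_injOn hn (Icc 1 (n : ℤ)) s (by rwa [coe_Icc]) (by simp) t
    obtain ⟨hk1, hkn⟩ := mem_Icc.1 hk
    refine ⟨k, ⟨hk1, not_lt.1 fun hik => ht k ⟨hik, hkn⟩ htk⟩, htk⟩
  · rintro ⟨k, hk, htk⟩ k' hk' htk'
    have := hres ⟨hk.1, by linarith [hk.2, hk'.1, hk'.2]⟩ ⟨by linarith [hk.1, hk.2, hk'.1], hk'.2⟩
      (htk.symm.trans htk')
    linarith [hk.2, hk'.1]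

lemma mem_avoidSet_add_one_iff {i t : ℤ} (hi : 0 ≤ i) :
    t ∈ avoidSet n s (i + 1) ↔ t ∈ avoidSet n s i ∨ t ≡ s (i + 1) [ZMOD n] := by
  constructor
  · intro ht
    refine (em (t ≡ s (i + 1) [ZMOD n])).elim Or.inr fun hne => Or.inl fun k hk => ?_
    rcases eq_or_lt_of_le (Int.add_one_le_iff.2 hk.1) with rfl | hlt
    · exact hne
    · exact ht k ⟨hlt, hk.2⟩
  · rintro (ht | ht) k hk htk
    · exact ht k ⟨by linarith [hk.1], hk.2⟩ htk
    · have := hres ⟨by omega, by linarith [hk.1, hk.2]⟩ ⟨by linarith [hk.1], hk.2⟩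
        (ht.symm.trans htk)
      linarith [hk.1]

end AvoidSet

lemma IsDominant.strictMonoOn {n : ℕ} {s : ℤ → ℤ} (h : IsDominant n s) :
    StrictMonoOn s (Set.Icc 1 (n : ℤ)) :=
  strictMonoOn_of_lt_add_one Set.ordConnected_Icc fun a _ ha ha1 => h a ha.1 (by linarith [ha1.2])

lemma card_filter_Ioc_add_card_filter_Ioc (p : ℤ → Prop) {a b c : ℤ} (hab : a ≤ b) (hbc : b ≤ c) :
    #{t ∈ Ioc a b | p t} + #{t ∈ Ioc b c | p t} = #{t ∈ Ioc a c | p t} := by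
  rw [← card_union_of_disjoint (disjoint_filter_filter (Ioc_disjoint_Ioc_of_le le_rfl)),
    ← filter_union, Ioc_union_Ioc_eq_Ioc hab hbc]

section SumOfGammas

variable {n : ℕ} {s : ℤ → ℤ} (hn : 0 < n)
  (hres : Set.InjOn (fun k => s k % n) (Set.Icc 1 (n : ℤ))) (hdom : IsDominant n s)
include hn hres hdom

omit hn in
lemma card_filter_avoidSet_add_card_filter_modEq {i : ℤ} (hi : i ∈ Set.Ico 1 (n : ℤ)) :
    #{t ∈ Ioc (s i) (s n) | t ∈ avoidSet n s i} +
        #{t ∈ Ioc (s (i + 1)) (s n) | t ≡ s (i + 1) [ZMOD n]} =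
      gam n s i + #{t ∈ Ioc (s (i + 1)) (s n) | t ∈ avoidSet n s (i + 1)} := by
  obtain ⟨hi1, hin⟩ := hi
  have hlt : s i < s (i + 1) := hdom i hi1 hin
  have hle : s (i + 1) ≤ s n :=
    hdom.strictMonoOn.monotoneOn ⟨by omega, by omega⟩ ⟨by omega, le_rfl⟩ (by omega)
  have hgam : gam n s i = #{t ∈ Ioc (s i) (s (i + 1)) | t ∈ avoidSet n s i} := by
    rw [gam_eq_card_filter, ← Ioo_insert_right hlt, filter_insert,
      if_neg fun h => h (i + 1) ⟨by omega, by omega⟩ rfl]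
  have hsplit : #{t ∈ Ioc (s (i + 1)) (s n) | t ∈ avoidSet n s (i + 1)} =
      #{t ∈ Ioc (s (i + 1)) (s n) | t ∈ avoidSet n s i} +
        #{t ∈ Ioc (s (i + 1)) (s n) | t ≡ s (i + 1) [ZMOD n]} := by
    rw [filter_congr fun t _ => mem_avoidSet_add_one_iff hres (by omega : 0 ≤ i), filter_or,
      card_union_of_disjoint (disjoint_filter.2 fun t _ ht => ht (i + 1) ⟨by omega, by omega⟩)]
  rw [hgam, hsplit, ← card_filter_Ioc_add_card_filter_Ioc _ hlt.le hle]
  ring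

/-- Telescoping: `avoidSet n s (m + 1)` gains exactly the residue class of `s (m + 1)`. -/
lemma sum_gam_add_card_filter_avoidSet {m : ℤ} (hm : m ∈ Set.Icc 1 (n : ℤ)) :
    ∑ i ∈ Ico 1 m, gam n s i + #{t ∈ Ioc (s m) (s n) | t ∈ avoidSet n s m} =
      ∑ k ∈ Icc 1 m, #{t ∈ Ioc (s k) (s n) | t ≡ s k [ZMOD n]} := by
  obtain ⟨hm1, hmn⟩ := hm
  induction m, hm1 using Int.leInduction with
  | base =>
    simp only [Ico_self, sum_empty, Icc_self, sum_singleton, zero_add]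
    congr 1
    refine filter_congr fun t _ =>
      (mem_avoidSet_iff hres hn).trans ⟨?_, fun h => ⟨1, ⟨le_rfl, le_rfl⟩, h⟩⟩
    rintro ⟨k, hk, htk⟩
    rwa [le_antisymm hk.2 hk.1] at htk
  | succ m hm1 ih =>
    rw [← insert_Ico_right_eq_Ico_add_one hm1, sum_insert (by simp),
      ← insert_Icc_right_eq_Icc_add_one (by omega), sum_insert (by simp)]
    have := card_filter_avoidSet_add_card_filter_modEq hres hdom ⟨hm1, by omega⟩
    have := ih (by omega)
    omega

lemma sum_gam_eq_sum_ediv :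
    (∑ i ∈ Ico 1 (n : ℤ), gam n s i : ℤ) = ∑ k ∈ Icc 1 (n : ℤ), (s n - s k) / n := by
  have h := sum_gam_add_card_filter_avoidSet hn hres hdom ⟨by omega, le_rfl⟩
  rw [Ioc_self, filter_empty, card_empty, add_zero] at h
  rw [← Nat.cast_sum, h, Nat.cast_sum]
  refine sum_congr rfl fun k hk => card_filter_modEq_Ioc hn ?_
  exact hdom.strictMonoOn.monotoneOn (by simpa using hk) ⟨by omega, le_rfl⟩ (mem_Icc.1 hk).2

/-- The remainders `(s n - s k) % n` run over `0, …, n - 1`, as do the `n - k`. -/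
lemma sum_eq_sum_id_iff :
    ∑ i ∈ Icc 1 (n : ℤ), s i = ∑ i ∈ Icc 1 (n : ℤ), i ↔
      (∑ i ∈ Ico 1 (n : ℤ), gam n s i : ℤ) = s n - n := by
  have hinj : Set.InjOn (fun k => (s n - s k) % n) (Icc 1 (n : ℤ) : Set ℤ) :=
    fun j hj k hk hjk => hres (by simpa using hj) (by simpa using hk)
      (show s j ≡ s k [ZMOD n] by
        simpa using Int.ModEq.sub_left (s n) (hjk : s n - s j ≡ s n - s k [ZMOD n]))
  have hrem : ∑ k ∈ Icc 1 (n : ℤ), (s n - s k) % n = n * n - ∑ k ∈ Icc 1 (n : ℤ), k :=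
    calc ∑ k ∈ Icc 1 (n : ℤ), (s n - s k) % n
        = ∑ r ∈ (Icc 1 (n : ℤ)).image (fun k => (s n - s k) % n), r :=
          (sum_image (f := fun r => r) hinj).symm
      _ = ∑ k ∈ Icc 1 (n : ℤ), (n - k) := by
        rw [image_emod_eq_Ico hn _ _ hinj (by simp)]
        refine sum_nbij' (fun r => n - r) (fun k => n - k) ?_ ?_ ?_ ?_ ?_ <;> intro a ha <;>
          simp only [mem_Ico, mem_Icc] at ha ⊢ <;>
          omega
      _ = n * n - ∑ k ∈ Icc 1 (n : ℤ), k := by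
        rw [sum_sub_distrib, sum_const, Int.card_Icc]
        simp
  have hdiv : ∑ k ∈ Icc 1 (n : ℤ), (s n - s k) =
      n * ∑ k ∈ Icc 1 (n : ℤ), (s n - s k) / n + ∑ k ∈ Icc 1 (n : ℤ), (s n - s k) % n := by
    rw [mul_sum, ← sum_add_distrib]
    exact sum_congr rfl fun k _ => (Int.mul_ediv_add_emod _ _).symm
  simp only [hrem, sum_sub_distrib, sum_const, Int.card_Icc, add_sub_cancel_right,
    Int.toNat_natCast, nsmul_eq_mul] at hdiv
  rw [sum_gam_eq_sum_ediv hn hres hdom]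
  constructor
  · intro h
    exact mul_left_cancel₀ (by omega : (n : ℤ) ≠ 0) (by linarith)
  · intro h
    rw [h] at hdiv
    linarith

end SumOfGammas

section Hypercube

variable {n : ℕ} {s : ℤ → ℤ} (hn : 0 < n)
  (hres : Set.InjOn (fun k => s k % n) (Set.Icc 1 (n : ℤ)))
include hn hres

lemma gam_eq_card_filter_emod_mem (i : ℤ) :
    gam n s i = #{t ∈ Ioo (s i) (s (i + 1)) | t % (n : ℤ) ∈ (Icc 1 i).image fun k => s k % n} := by
  rw [gam_eq_card_filter]
  refine congrArg card (filter_congr fun t _ => (mem_avoidSet_iff hres hn).trans ?_)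
  simp only [mem_image, mem_Icc, Set.mem_Icc, Int.ModEq, eq_comm]

lemma lt_add_iff_gam_le {i : ℤ} (hi : i ∈ Set.Ico 1 (n : ℤ)) :
    s (i + 1) < s i + n ↔ (gam n s i : ℤ) ≤ i - 1 := by
  obtain ⟨hi1, hin⟩ := hi
  rw [gam_eq_card_filter_emod_mem hn hres]
  set C := (Icc 1 i).image fun k => s k % n
  have hC : #C = i := by
    rw [card_image_of_injOn (hres.mono (by simp [Set.Icc_subset_Icc_right hin.le])),
      Int.card_Icc]
    omega
  constructor
  · intro hlt
    have hsi : s i % n ∈ C := mem_image.2 ⟨i, mem_Icc.2 ⟨hi1, le_rfl⟩, rfl⟩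
    have := card_filter_emod_mem_le_card_erase C hlt.le
    rw [card_erase_of_mem hsi] at this
    omega
  · intro hle
    by_contra! hge
    have hne : s (i + 1) ≠ s i + n := fun h => by
      have := hres ⟨by omega, by omega⟩ ⟨hi1, hin.le⟩
        (by simp only [h, Int.add_emod_right] : s (i + 1) % n = s i % n)
      omega
    have hCsub : C ⊆ Ico 0 (n : ℤ) := fun r hr => by
      obtain ⟨k, -, rfl⟩ := mem_image.1 hr
      exact mem_Ico.2 ⟨Int.emod_nonneg _ (by omega), Int.emod_lt_of_pos _ (by omega)⟩
    have := card_le_card_filter_emod_mem hn hCsub (lt_of_le_of_ne hge hne.symm)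
    omega

end Hypercube

section Reconstruction

variable {n : ℕ}

structure IsWindowFrom (n : ℕ) (N : ℤ) (G : ℤ → ℕ) (k : ℤ) (w : ℤ → ℤ) : Prop where
  top : w n = N
  lt_add_one : ∀ i ∈ Set.Ico k (n : ℤ), w i < w (i + 1)
  gam_eq : ∀ i ∈ Set.Ico k (n : ℤ), gam n w i = G i
  injOn_emod : Set.InjOn (fun j => w j % n) (Set.Icc k (n : ℤ))

lemma IsWindowFrom.exists_sub_one (hn : 0 < n) {N : ℤ} {G : ℤ → ℕ} {k : ℤ} {w : ℤ → ℤ}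
    (hw : IsWindowFrom n N G k w) (hk : 1 < k) (hkn : k ≤ n) :
    ∃ w', IsWindowFrom n N G (k - 1) w' := by
  obtain ⟨x, ⟨hxR, hxw, hcard⟩, -⟩ := existsUnique_card_filter_Ioo_eq
    (exists_mem_avoidSet_lt hn (avoidSet_nonempty (s := w) hn (by omega : 0 < k - 1)))
    (w k) (G (k - 1))
  set w' := Function.update w (k - 1) x
  have hw'x : w' (k - 1) = x := Function.update_self ..
  have hagree : Set.EqOn w' w (Set.Icc k n) := fun j hj =>
    Function.update_of_ne (by linarith [hj.1]) ..
  have hk' : w' k = w k := hagree ⟨le_rfl, hkn⟩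
  have hIoc : Set.Ioc (k - 1) (n : ℤ) = Set.Icc k n := Set.Ioc_sub_one_left_eq_Icc k n
  refine ⟨w', hagree ⟨hkn, le_rfl⟩ ▸ hw.top, fun i ⟨hki, hin⟩ => ?_, fun i ⟨hki, hin⟩ => ?_, ?_⟩
  · rcases eq_or_lt_of_le hki with rfl | hlt
    · rwa [hw'x, sub_add_cancel, hk']
    · rw [hagree ⟨by omega, hin.le⟩, hagree ⟨by omega, by omega⟩]
      exact hw.lt_add_one i ⟨by omega, hin⟩
  · rcases eq_or_lt_of_le hki with rfl | hlt
    · rw [gam_eq_card_filter, hw'x, sub_add_cancel, hk',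
        avoidSet_congr (hagree.mono hIoc.subset), hcard]
    · rw [gam_congr hin (hagree.mono (Set.Icc_subset_Icc_left (by omega)))]
      exact hw.gam_eq i ⟨by omega, hin⟩
  · rw [← Set.insert_Icc_left_eq_Icc_sub_one (by omega), Set.injOn_insert (by simp)]
    refine ⟨hw.injOn_emod.congr fun j hj => by rw [hagree hj], ?_⟩
    rintro ⟨j, hj, hjx⟩
    exact hxR j (hIoc.superset hj) (show x % n = w j % n by simpa [hw'x, hagree hj] using hjx.symm)

lemma exists_isWindowFrom_one (hn : 0 < n) (N : ℤ) (G : ℤ → ℕ) :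
    ∃ w, IsWindowFrom n N G 1 w := by
  suffices h : ∀ k ≤ (n : ℤ), 1 ≤ k → ∃ w, IsWindowFrom n N G k w from h 1 (by omega) le_rfl
  intro k hkn
  induction k, hkn using Int.leInductionDown with
  | base => exact fun _ => ⟨fun _ => N, rfl, by simp, by simp, by simp⟩
  | pred k hkn ih =>
    intro hk
    obtain ⟨w, hw⟩ := ih (by omega)
    exact hw.exists_sub_one hn (by omega) hkn

end Reconstruction

section Bijection

variable {n : ℕ} {s s' : ℤ → ℤ}

lemma IsAffPerm.injOn_emod (h : IsAffPerm n s) :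
    Set.InjOn (fun k => s k % n) (Set.Icc 1 (n : ℤ)) :=
  injOn_emod_of_injective h.2.1 h.1.1

/-- Downwards from `s n`, each `s (k - 1)` is the unique element of `avoidSet n s (k - 1)`
below `s k` with `gam n s (k - 1)` elements of that set strictly in between. -/
lemma eqOn_Icc_of_gam_eq (hn : 0 < n) (hres : Set.InjOn (fun k => s k % n) (Set.Icc 1 (n : ℤ)))
    (hres' : Set.InjOn (fun k => s' k % n) (Set.Icc 1 (n : ℤ))) (hdom : IsDominant n s)
    (hdom' : IsDominant n s') (htop : s n = s' n)
    (hgam : ∀ i ∈ Set.Ico 1 (n : ℤ), gam n s i = gam n s' i) :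
    Set.EqOn s s' (Set.Icc 1 n) := by
  suffices h : ∀ k ≤ (n : ℤ), 1 ≤ k → Set.EqOn s s' (Set.Icc k n) from h 1 (by omega) le_rfl
  intro k hkn
  induction k, hkn using Int.leInductionDown with
  | base => exact fun _ j hj => by rw [le_antisymm hj.2 hj.1, htop]
  | pred k hkn ih =>
    intro hk
    have hagree := ih (by omega)
    have hR : avoidSet n s (k - 1) = avoidSet n s' (k - 1) :=
      avoidSet_congr (hagree.mono (Set.Ioc_sub_one_left_eq_Icc k n).subset)
    have hsk : s k = s' k := hagree ⟨le_rfl, hkn⟩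
    have hmem : k - 1 ∈ Set.Icc 1 (n : ℤ) := ⟨by omega, by omega⟩
    have hpred : s (k - 1) = s' (k - 1) := by
      refine (existsUnique_card_filter_Ioo_eq
        (exists_mem_avoidSet_lt hn ⟨_, mem_avoidSet_self hres hmem⟩) (s k) (gam n s (k - 1))).unique
        ⟨mem_avoidSet_self hres hmem, ?_, ?_⟩ ⟨hR ▸ mem_avoidSet_self hres' hmem, ?_, ?_⟩
      · simpa using hdom (k - 1) (by omega) (by omega)
      · rw [gam_eq_card_filter, sub_add_cancel]
      · simpa [hsk] using hdom' (k - 1) (by omega) (by omega)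
      · rw [hR, hsk, hgam (k - 1) ⟨by omega, by omega⟩, gam_eq_card_filter, sub_add_cancel]
    rw [← Set.insert_Icc_left_eq_Icc_sub_one (by omega)]
    rintro j (rfl | hj)
    exacts [hpred, hagree hj]

theorem eq_of_gam_eq (hn : 0 < n) (hs : IsAffPerm n s) (hs' : IsAffPerm n s')
    (hdom : IsDominant n s) (hdom' : IsDominant n s')
    (hgam : ∀ i ∈ Set.Ico 1 (n : ℤ), gam n s i = gam n s' i) : s = s' := by
  have htop : s n = s' n := by
    have h := (sum_eq_sum_id_iff hn hs.injOn_emod hdom).1 hs.2.2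
    have h' := (sum_eq_sum_id_iff hn hs'.injOn_emod hdom').1 hs'.2.2
    rw [sum_congr rfl fun i hi => by rw [hgam i (by simpa using hi)]] at h
    linarith
  exact eq_of_eqOn_Icc hn hs.2.1 hs'.2.1
    (eqOn_Icc_of_gam_eq hn hs.injOn_emod hs'.injOn_emod hdom hdom' htop hgam)

theorem exists_isAffPerm_isDominant_gam_eq (hn : 0 < n) (G : ℤ → ℕ) :
    ∃ s, IsAffPerm n s ∧ IsDominant n s ∧ ∀ i ∈ Set.Ico 1 (n : ℤ), gam n s i = G i := by
  obtain ⟨w, hw⟩ := exists_isWindowFrom_one hn (n + ∑ i ∈ Ico 1 (n : ℤ), G i) G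
  set s := extendWindow n w
  have hsw : Set.EqOn s w (Set.Icc 1 n) := fun t ht => extendWindow_of_mem_Icc w ht
  have hres : Set.InjOn (fun k => s k % n) (Set.Icc 1 (n : ℤ)) :=
    hw.injOn_emod.congr fun j hj => by rw [hsw hj]
  have hdom : IsDominant n s := fun i hi1 hin => by
    rw [hsw ⟨hi1, hin.le⟩, hsw ⟨by omega, by omega⟩]
    exact hw.lt_add_one i ⟨hi1, hin⟩
  have hgam : ∀ i ∈ Set.Ico 1 (n : ℤ), gam n s i = G i := fun i hi =>
    (gam_congr hi.2 (hsw.mono (Set.Icc_subset_Icc_left hi.1))).trans (hw.gam_eq i hi)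
  refine ⟨s, ⟨bijective_of_injOn_emod hn (extendWindow_add hn w) hres, extendWindow_add hn w,
    (sum_eq_sum_id_iff hn hres hdom).2 ?_⟩, hdom, hgam⟩
  rw [sum_congr rfl fun i hi => by rw [hgam i (by simpa using hi)], hsw ⟨by omega, le_rfl⟩,
    hw.top]
  push_cast
  ring

end Bijection

lemma forall_fin_sub_one_iff {n : ℕ} {P : ℤ → Prop} :
    (∀ k : Fin (n - 1), P ((k : ℕ) + 1)) ↔ ∀ i ∈ Set.Ico 1 (n : ℤ), P i := by
  refine ⟨fun h i ⟨hi1, hin⟩ => ?_, fun h k => h _ ⟨by omega, by have := k.isLt; omega⟩⟩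
  have := h ⟨(i - 1).toNat, by omega⟩
  rwa [show (((i - 1).toNat : ℕ) : ℤ) + 1 = i by omega] at this

/-- The map `s ↦ (γ_1(s), …, γ_{n-1}(s))` is a bijection from the dominant elements of
the affine symmetric group onto `ℕ^{n-1}`; moreover a dominant `s` lies in the unit
hypercube (i.e. `s(i) + n > s(i+1)` for `1 ≤ i ≤ n-1`) if and only if `γ_i(s) ≤ i-1`
for all such `i`. -/
theorem gamma_bijection_and_hypercube (n : ℕ) (hn : 2 ≤ n) :
    Function.Bijective
      (fun s : {f : ℤ → ℤ // IsAffPerm n f ∧ IsDominant n f} =>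
        fun k : Fin (n - 1) => gam n s.1 (((k : ℕ) : ℤ) + 1)) ∧
    ∀ s : ℤ → ℤ, IsAffPerm n s → IsDominant n s →
      ((∀ i : ℤ, 1 ≤ i → i < (n : ℤ) → s (i + 1) < s i + n) ↔
       (∀ i : ℤ, 1 ≤ i → i < (n : ℤ) → (gam n s i : ℤ) ≤ i - 1)) := by
  have hn0 : 0 < n := by omega
  refine ⟨⟨fun s s' h => Subtype.ext ?_, fun g => ?_⟩, fun s hs _ => ?_⟩
  · exact eq_of_gam_eq hn0 s.2.1 s'.2.1 s.2.2 s'.2.2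
      (forall_fin_sub_one_iff.1 fun k => congrFun h k)
  · obtain ⟨s, hs, hdom, hgam⟩ := exists_isAffPerm_isDominant_gam_eq hn0
      fun i => if h : (i - 1).toNat < n - 1 then g ⟨(i - 1).toNat, h⟩ else 0
    refine ⟨⟨s, hs, hdom⟩, funext fun k => ?_⟩
    simpa using forall_fin_sub_one_iff.2 hgam k
  · exact forall_congr' fun i => forall₂_congr fun hi1 hin =>
      lt_add_iff_gam_le hn0 hs.injOn_emod ⟨hi1, hin⟩
end
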